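/- arXiv:2006.00106 — 2 statements merged into one kernel-verified Lean document; each statement's English description precedes it below -/
import Mathlib

section
/- Let k ∈ L¹(0,∞) with ‖k‖_{L¹} < 1, let S(t) be the right-translation isometry semigroup on L¹(0,∞), and define ⟨B w, J(w)⟩ := ‖w‖_{L¹}·∫₀^∞ (1 + k(x)) |w(x)| dx for w ∈ L¹. Then for every T > 0 and every y ∈ L¹(0,∞), ∫₀^T ⟨B S(t)y, J(S(t)y)⟩ dt ≥ (T − ‖k‖_{L¹})·‖y‖²_{L¹}. In particular, for T ≥ 1 the observability inequality ∫₀^T ⟨B S(t)y, J(S(t)y)⟩ dt ≥ δ‖y‖² holds with δ = T − ‖k‖_{L¹} > 0. -/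
/-!
The shift `S(t)` is translation of the zero extension of `y`, so for `t > 0` it preserves the
`L¹(0, ∞)` norm and `⟨B S(t)y, J(S(t)y)⟩ = ‖y‖₁ (‖y‖₁ + ∫ k |S(t)y|)`. The correction term is
controlled by admissibility: by Tonelli and translation invariance,
`∫_ℝ ∫₀^∞ |k(x)| |S(t)y(x)| dx dt = ‖k‖₁ ‖y‖₁`, so integrating over `t ∈ (0, T]` costs at most
`‖k‖₁ ‖y‖₁²` against the main term `T ‖y‖₁²`.
-/

open MeasureTheory

/-- Right-translation: `(S t y)(ξ) = y(ξ − t)` if `ξ ≥ t`, `0` otherwise. -/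
noncomputable def rightShift (t : ℝ) (y : ℝ → ℝ) : ℝ → ℝ :=
  fun ξ => if t ≤ ξ then y (ξ - t) else 0

open Set

/-- `⟨B w, J(w)⟩` for `B w = (1 + k) w` and the duality map `J` of `L¹(0, ∞)`. -/
noncomputable def dualityPairing (k w : ℝ → ℝ) : ℝ :=
  (∫ x in Ioi 0, |w x|) * ∫ x in Ioi 0, (1 + k x) * |w x|

theorem dualityPairing_congr_ae (k : ℝ → ℝ) {w v : ℝ → ℝ}
    (h : w =ᵐ[volume.restrict (Ioi 0)] v) : dualityPairing k w = dualityPairing k v := by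
  unfold dualityPairing
  congr 1 <;> exact integral_congr_ae (by filter_upwards [h] with x hx; rw [hx])

section rightShift

variable {y : ℝ → ℝ} {t : ℝ}

theorem rightShift_apply_eq_indicator (t : ℝ) (y : ℝ → ℝ) (x : ℝ) :
    rightShift t y x = (Ici 0).indicator y (x - t) := by
  simp [rightShift, indicator, sub_nonneg]

theorem abs_rightShift (t : ℝ) (y : ℝ → ℝ) (x : ℝ) :
    |rightShift t y x| = rightShift t (fun x => |y x|) x := by
  unfold rightShift
  split_ifs <;> simp

theorem rightShift_ae_eq {z : ℝ → ℝ} (h : y =ᵐ[volume.restrict (Ioi 0)] z) (t : ℝ) :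
    rightShift t y =ᵐ[volume] rightShift t z := by
  rw [Measure.restrict_congr_set Ioi_ae_eq_Ici,
    ae_eq_restrict_iff_indicator_ae_eq measurableSet_Ici] at h
  filter_upwards [(measurePreserving_sub_right volume t).quasiMeasurePreserving.ae_eq_comp h]
    with x hx
  simpa [rightShift_apply_eq_indicator] using hx

theorem setIntegral_Ioi_rightShift (ht : 0 ≤ t) (y : ℝ → ℝ) :
    ∫ x in Ioi 0, rightShift t y x = ∫ x in Ioi 0, y x := by
  simp_rw [← integral_Ici_eq_integral_Ioi, rightShift_apply_eq_indicator]
  rw [setIntegral_eq_integral_of_forall_compl_eq_zero, integral_sub_right_eq_self,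
    integral_indicator measurableSet_Ici]
  intro x hx
  exact indicator_of_notMem (by simp only [mem_Ici, not_le] at hx ⊢; linarith) _

theorem setIntegral_Ioi_abs_rightShift (ht : 0 ≤ t) (y : ℝ → ℝ) :
    ∫ x in Ioi 0, |rightShift t y x| = ∫ x in Ioi 0, |y x| := by
  simp_rw [abs_rightShift]
  exact setIntegral_Ioi_rightShift ht _

theorem MeasureTheory.IntegrableOn.integrable_rightShift (hy : IntegrableOn y (Ioi 0))
    (t : ℝ) : Integrable (rightShift t y) := by
  have hext : Integrable ((Ici 0).indicator y) :=
    (integrable_indicator_iff measurableSet_Ici).2 (by rwa [integrableOn_Ici_iff_integrableOn_Ioi])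
  simpa only [funext (rightShift_apply_eq_indicator t y)] using hext.comp_sub_right t

theorem Measurable.rightShift_uncurry (hy : Measurable y) :
    Measurable fun p : ℝ × ℝ => rightShift p.1 y p.2 := by
  simp_rw [rightShift_apply_eq_indicator]
  exact (hy.indicator measurableSet_Ici).comp (measurable_snd.sub measurable_fst)

end rightShift

section admissibility

variable {k y : ℝ → ℝ}

theorem lintegral_lintegral_enorm_mul_rightShift
    (hk : AEMeasurable k (volume.restrict (Ioi 0))) (hy : Measurable y) :
    ∫⁻ t, ∫⁻ x in Ioi 0, ‖k x * rightShift t y x‖ₑ =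
      (∫⁻ x in Ioi 0, ‖k x‖ₑ) * ∫⁻ x in Ioi 0, ‖y x‖ₑ := by
  have hshift : ∀ x, ∫⁻ t, ‖rightShift t y x‖ₑ = ∫⁻ s in Ioi 0, ‖y s‖ₑ := fun x => by
    simp_rw [rightShift_apply_eq_indicator, enorm_indicator_eq_indicator_enorm]
    rw [lintegral_sub_left_eq_self (fun s => (Ici 0).indicator (fun s => ‖y s‖ₑ) s) x,
      lintegral_indicator measurableSet_Ici, setLIntegral_congr Ioi_ae_eq_Ici]
  rw [lintegral_lintegral_swap ((hk.comp_snd.mul hy.rightShift_uncurry.aemeasurable).enorm)]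
  simp_rw [enorm_mul, lintegral_const_mul' _ _ enorm_ne_top, hshift]
  exact lintegral_mul_const'' _ hk.enorm

variable (hk : IntegrableOn k (Ioi 0)) (hy : IntegrableOn y (Ioi 0)) (hym : Measurable y)
include hk hy hym

theorem integrable_mul_rightShift (s : Set ℝ) :
    Integrable (fun p : ℝ × ℝ => k p.2 * rightShift p.1 y p.2)
      ((volume.restrict s).prod (volume.restrict (Ioi 0))) := by
  have hm : AEMeasurable (fun p : ℝ × ℝ => k p.2 * rightShift p.1 y p.2)
      ((volume.restrict s).prod (volume.restrict (Ioi 0))) :=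
    hk.aemeasurable.comp_snd.mul hym.rightShift_uncurry.aemeasurable
  refine ⟨hm.aestronglyMeasurable, ?_⟩
  rw [HasFiniteIntegral, lintegral_prod _ hm.enorm]
  calc _ ≤ ∫⁻ t, ∫⁻ x in Ioi 0, ‖k x * rightShift t y x‖ₑ := setLIntegral_le_lintegral _ _
    _ = _ := lintegral_lintegral_enorm_mul_rightShift hk.aemeasurable hym
    _ < ⊤ := ENNReal.mul_lt_top hk.2 hy.2

theorem abs_setIntegral_integral_mul_rightShift_le (s : Set ℝ) :
    |∫ t in s, ∫ x in Ioi 0, k x * rightShift t y x| ≤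
      (∫ x in Ioi 0, |k x|) * ∫ x in Ioi 0, |y x| := by
  have hK := ofReal_integral_norm_eq_lintegral_enorm hk
  have hY := ofReal_integral_norm_eq_lintegral_enorm hy
  simp only [Real.norm_eq_abs] at hK hY
  rw [← ENNReal.ofReal_le_ofReal_iff (by positivity), ← Real.enorm_eq_ofReal_abs,
    ENNReal.ofReal_mul (by positivity), hK, hY,
    ← lintegral_lintegral_enorm_mul_rightShift hk.aemeasurable hym]
  calc ‖∫ t in s, ∫ x in Ioi 0, k x * rightShift t y x‖ₑ
      ≤ ∫⁻ t in s, ‖∫ x in Ioi 0, k x * rightShift t y x‖ₑ := enorm_integral_le_lintegral_enorm _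
    _ ≤ ∫⁻ t in s, ∫⁻ x in Ioi 0, ‖k x * rightShift t y x‖ₑ :=
      lintegral_mono fun _ => enorm_integral_le_lintegral_enorm _
    _ ≤ _ := setLIntegral_le_lintegral _ _

end admissibility

theorem dualityPairing_rightShift {k y : ℝ → ℝ} (hy : IntegrableOn y (Ioi 0)) {t : ℝ}
    (ht : 0 ≤ t) (hky : IntegrableOn (fun x => k x * rightShift t (fun x => |y x|) x) (Ioi 0)) :
    dualityPairing k (rightShift t y) = (∫ x in Ioi 0, |y x|) *
      ((∫ x in Ioi 0, |y x|) + ∫ x in Ioi 0, k x * rightShift t (fun x => |y x|) x) := by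
  have hsplit : ∀ x, (1 + k x) * |rightShift t y x| =
      rightShift t (fun x => |y x|) x + k x * rightShift t (fun x => |y x|) x := fun x => by
    rw [abs_rightShift]; ring
  simp_rw [dualityPairing, setIntegral_Ioi_abs_rightShift ht, hsplit]
  rw [integral_add (IntegrableOn.integrable_rightShift hy.abs t).integrableOn hky,
    setIntegral_Ioi_rightShift ht]

theorem le_integral_dualityPairing_rightShift {k y : ℝ → ℝ} (hk : IntegrableOn k (Ioi 0))
    (hy : IntegrableOn y (Ioi 0)) (hym : Measurable y) {T : ℝ} (hT : 0 ≤ T) :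
    (T - ∫ x in Ioi 0, |k x|) * (∫ x in Ioi 0, |y x|) ^ 2 ≤
      ∫ t in 0..T, dualityPairing k (rightShift t y) := by
  set Y := ∫ x in Ioi 0, |y x|
  have hprod := integrable_mul_rightShift hk hy.abs hym.abs (Ioc 0 T)
  have hpair : ∀ᵐ t ∂volume.restrict (Ioc 0 T), dualityPairing k (rightShift t y) =
      Y * Y + Y * ∫ x in Ioi 0, k x * rightShift t (fun x => |y x|) x := by
    filter_upwards [hprod.prod_right_ae, ae_restrict_mem measurableSet_Ioc] with t hint ht
    rw [dualityPairing_rightShift hy ht.1.le hint]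
    ring
  have hbound := abs_setIntegral_integral_mul_rightShift_le hk hy.abs hym.abs (Ioc 0 T)
  simp only [abs_abs] at hbound
  rw [intervalIntegral.integral_of_le hT, integral_congr_ae hpair,
    integral_add (integrable_const _) (hprod.integral_prod_left.const_mul Y), integral_const,
    integral_const_mul]
  have hY : 0 ≤ Y := by positivity
  simp only [measureReal_restrict_apply_univ, Real.volume_real_Ioc_of_le hT, sub_zero,
    smul_eq_mul]
  nlinarith [mul_le_mul_of_nonneg_left (abs_le.1 hbound).1 hY]

/-- Observability inequality for `B w = (1+k) w` along the right-translation semigroup,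
with the duality pairing `⟨B w, J(w)⟩ = ‖w‖₁ ∫ (1+k)|w|`: for every `T > 0`,
`∫₀^T ⟨B S(t)y, J(S(t)y)⟩ dt ≥ (T − ‖k‖₁) ‖y‖₁²`; in particular for `T ≥ 1` the
constant `δ = T − ‖k‖₁` is positive. -/
theorem stmt_11 (k : ℝ → ℝ) (hk : IntegrableOn k (Set.Ioi 0))
    (hk1 : ∫ x in Set.Ioi (0:ℝ), |k x| < 1)
    (y : ℝ → ℝ) (hy : IntegrableOn y (Set.Ioi 0)) (T : ℝ) (hT : 0 < T) :
    ((T - ∫ x in Set.Ioi (0:ℝ), |k x|) * (∫ x in Set.Ioi (0:ℝ), |y x|) ^ 2 ≤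
      ∫ t in (0:ℝ)..T, (∫ x in Set.Ioi (0:ℝ), |rightShift t y x|) *
        ∫ x in Set.Ioi (0:ℝ), (1 + k x) * |rightShift t y x|) ∧
    (1 ≤ T → 0 < T - ∫ x in Set.Ioi (0:ℝ), |k x|) := by
  refine ⟨?_, fun h1T => by linarith⟩
  obtain ⟨z, hzm, hyz⟩ := hy.aemeasurable
  have hY : ∫ x in Ioi 0, |y x| = ∫ x in Ioi 0, |z x| := integral_congr_ae (hyz.fun_comp abs)
  have hpair : ∀ t, dualityPairing k (rightShift t y) = dualityPairing k (rightShift t z) :=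
    fun t => dualityPairing_congr_ae k (ae_restrict_of_ae (rightShift_ae_eq hyz t))
  show _ ≤ ∫ t in (0:ℝ)..T, dualityPairing k (rightShift t y)
  simp_rw [hY, hpair]
  exact le_integral_dualityPairing_rightShift hk (hy.congr_fun_ae hyz) hzm hT.le
end

section
/- Let y : [0,1] → ℝ be continuously differentiable with y'(0) = y'(1) = 0, let s₀ maximize |y| on [0,1], and let φ = y(s₀)δ_{s₀} be the corresponding duality element. Then φ(y + y') = ‖y‖²_∞, i.e., ⟨(I + ∂_x)y, J(y)⟩ = ‖y‖² for this choice of duality element. -/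
/-!
At an endpoint of `[0,1]` the Neumann condition kills `y'(s₀)`; at an interior point `s₀` is a
local maximum of `y²`, so `(y²)'(s₀) = 2 y(s₀) y'(s₀) = 0`. Either way `y(s₀) y'(s₀) = 0`, and
`y(s₀)² = |y(s₀)|²` is the squared sup norm.
-/

open Set

-- No differentiability hypothesis is needed: where `f` is not differentiable, `deriv f a` is the junk value `0`.
theorem mul_deriv_eq_zero_of_isLocalMax_abs {f : ℝ → ℝ} {a : ℝ}
    (h : IsLocalMax (fun x => |f x|) a) : f a * deriv f a = 0 := by
  by_cases hf : DifferentiableAt ℝ f a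
  · have hsq : IsLocalMax (fun x => f x ^ 2) a := by
      filter_upwards [h] with x hx
      simpa only [sq_abs] using pow_le_pow_left₀ (abs_nonneg _) hx 2
    have hderiv : deriv (fun x => f x ^ 2) a = 2 * f a * deriv f a := by
      rw [deriv_fun_pow hf]
      norm_num
    linarith [hsq.deriv_eq_zero]
  · rw [deriv_zero_of_not_differentiableAt hf, mul_zero]

theorem sSup_image_eq_of_isMaxOn {α : Type*} {f : α → ℝ} {s : Set α} {a : α}
    (ha : a ∈ s) (hmax : IsMaxOn f s a) : sSup (f '' s) = f a :=
  IsGreatest.csSup_eq ⟨mem_image_of_mem f ha, by rintro _ ⟨x, hx, rfl⟩; exact hmax hx⟩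

theorem stmt_14_general (y : ℝ → ℝ)
    (h0 : deriv y 0 = 0) (h1 : deriv y 1 = 0)
    (s₀ : ℝ) (hs₀ : s₀ ∈ Set.Icc (0:ℝ) 1)
    (hmax : ∀ s ∈ Set.Icc (0:ℝ) 1, |y s| ≤ |y s₀|) :
    y s₀ * (y s₀ + deriv y s₀) = (sSup ((fun s => |y s|) '' Set.Icc (0:ℝ) 1)) ^ 2 := by
  have hmaxOn : IsMaxOn (fun s => |y s|) (Icc 0 1) s₀ := hmax
  have hcrit : y s₀ * deriv y s₀ = 0 := by
    rcases eq_endpoints_or_mem_Ioo_of_mem_Icc hs₀ with rfl | rfl | hint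
    · rw [h0, mul_zero]
    · rw [h1, mul_zero]
    · exact mul_deriv_eq_zero_of_isLocalMax_abs (hmaxOn.isLocalMax (Icc_mem_nhds hint.1 hint.2))
  rw [sSup_image_eq_of_isMaxOn hs₀ hmaxOn, sq_abs]
  linear_combination hcrit

/-- Coercivity identity `⟨(I + ∂ₓ)y, J(y)⟩ = ‖y‖²` for the duality element
`φ = y(s₀) δ_{s₀}`: if `y` is `C¹` with `y'(0) = y'(1) = 0` and `s₀` maximizes `|y|`
on `[0,1]`, then `y(s₀)·(y(s₀) + y'(s₀)) = ‖y‖∞²`. -/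
theorem stmt_14 (y : ℝ → ℝ) (hy : ContDiff ℝ 1 y)
    (h0 : deriv y 0 = 0) (h1 : deriv y 1 = 0)
    (s₀ : ℝ) (hs₀ : s₀ ∈ Set.Icc (0:ℝ) 1)
    (hmax : ∀ s ∈ Set.Icc (0:ℝ) 1, |y s| ≤ |y s₀|) :
    y s₀ * (y s₀ + deriv y s₀) = (sSup ((fun s => |y s|) '' Set.Icc (0:ℝ) 1)) ^ 2 :=
  stmt_14_general y h0 h1 s₀ hs₀ hmax
end
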